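/- arXiv:1902.04839 — 8 statements merged into one kernel-verified Lean document; each statement's English description precedes it below -/
import Mathlib

section
/- Let G be an abelian lattice-ordered group and u > 0. Then exactly one of the following holds: [0,u] = {0,u}; there exists x in (0,u) with [0,u] = {0,u,x}; there exists x in (0,u) with [0,u] = {0,u,x,u-x}; or for every x in (0,u) there exists y in (0,u) with x < y or y < x. -/
/-- Dichotomy for the interval `[0,u]` in an abelian ℓ-group. -/
theorem stmt1 {G : Type*} [Lattice G] [AddCommGroup G]
    [CovariantClass G G (· + ·) (· ≤ ·)]
    (u : G) (hu : 0 < u) :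
    (Set.Icc (0 : G) u = {0, u}) ∨
    (∃ x ∈ Set.Icc (0 : G) u \ {0, u}, Set.Icc (0 : G) u = {0, u, x}) ∨
    (∃ x ∈ Set.Icc (0 : G) u \ {0, u}, Set.Icc (0 : G) u = {0, u, x, u - x}) ∨
    (∀ x ∈ Set.Icc (0 : G) u \ {0, u}, ∃ y ∈ Set.Icc (0 : G) u \ {0, u},
      x < y ∨ y < x) := by
  by_cases hlast : ∀ x ∈ Set.Icc (0 : G) u \ {0, u}, ∃ y ∈ Set.Icc (0 : G) u \ {0, u},
      x < y ∨ y < x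
  · exact Or.inr (Or.inr (Or.inr hlast))
  by_cases htriv : ∀ z ∈ Set.Icc (0 : G) u, z = 0 ∨ z = u
  · left
    ext z
    simp only [Set.mem_insert_iff, Set.mem_singleton_iff]
    constructor
    · exact htriv z
    · rintro (rfl | rfl) <;> simp [hu.le, le_refl]
  push_neg at hlast htriv
  obtain ⟨x, hx, hy⟩ := hlast
  obtain ⟨⟨hx0, hxu⟩, hxne⟩ := hx
  simp only [Set.mem_insert_iff, Set.mem_singleton_iff, not_or] at hxne
  obtain ⟨hxne0, hxneu⟩ := hxne
  have hx0' : (0 : G) < x := lt_of_le_of_ne hx0 (Ne.symm hxne0)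
  have hxu' : x < u := lt_of_le_of_ne hxu hxneu
  have hnc : ∀ y ∈ Set.Icc (0 : G) u \ {0, u}, ¬ x < y ∧ ¬ y < x := by
    intro y hym
    have := hy y hym
    exact this
  have key : ∀ z ∈ Set.Icc (0 : G) u, z = 0 ∨ z = u ∨ z = x ∨ z = u - x := by
    intro z hz
    by_cases hz0 : z = 0; · exact Or.inl hz0
    by_cases hzu : z = u; · exact Or.inr (Or.inl hzu)
    by_cases hzx : z = x; · exact Or.inr (Or.inr (Or.inl hzx))
    have hzm : z ∈ Set.Icc (0 : G) u \ {0, u} := ⟨hz, by simp [hz0, hzu]⟩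
    obtain ⟨h1, h2⟩ := hnc z hzm
    have hinf : x ⊓ z = 0 := by
      by_contra hne
      have hle : x ⊓ z < x := by
        refine lt_of_le_of_ne inf_le_left ?_
        intro h
        exact h1 (lt_of_le_of_ne (by rw [← h]; exact inf_le_right) (Ne.symm hzx))
      have hmem : x ⊓ z ∈ Set.Icc (0 : G) u \ {0, u} := by
        refine ⟨⟨le_inf hx0 hz.1, inf_le_left.trans hxu⟩, ?_⟩
        simp only [Set.mem_insert_iff, Set.mem_singleton_iff, not_or]
        exact ⟨hne, (inf_le_left.trans_lt hxu').ne⟩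
      exact (hnc _ hmem).2 hle
    have hsup : x ⊔ z = u := by
      by_contra hne
      have hlt : x < x ⊔ z := by
        refine lt_of_le_of_ne le_sup_left ?_
        intro h
        exact h2 (lt_of_le_of_ne (h ▸ le_sup_right) hzx)
      have hmem : x ⊔ z ∈ Set.Icc (0 : G) u \ {0, u} := by
        refine ⟨⟨hx0.trans le_sup_left, sup_le hxu hz.2⟩, ?_⟩
        simp only [Set.mem_insert_iff, Set.mem_singleton_iff, not_or]
        exact ⟨(hx0'.trans hlt).ne', hne⟩
      exact (hnc _ hmem).1 hlt
    have : x + z = u := by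
      have := inf_add_sup x z
      rw [hinf, hsup, zero_add] at this
      exact this.symm
    right; right; right
    exact eq_sub_of_add_eq (by rw [add_comm]; exact this)
  -- the interval is contained in {0, u, x, u - x}
  by_cases hux : u - x = x
  · -- second case
    right; left
    refine ⟨x, ⟨⟨hx0, hxu⟩, by simp [hxne0, hxneu]⟩, ?_⟩
    ext z
    simp only [Set.mem_insert_iff, Set.mem_singleton_iff]
    constructor
    · intro hz
      rcases key z hz with h | h | h | h
      · exact Or.inl h
      · exact Or.inr (Or.inl h)
      · exact Or.inr (Or.inr h)
      · exact Or.inr (Or.inr (h.trans hux))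
    · rintro (rfl | rfl | rfl)
      · exact ⟨le_refl _, hu.le⟩
      · exact ⟨hu.le, le_refl _⟩
      · exact ⟨hx0, hxu⟩
  · right; right; left
    refine ⟨x, ⟨⟨hx0, hxu⟩, by simp [hxne0, hxneu]⟩, ?_⟩
    ext z
    simp only [Set.mem_insert_iff, Set.mem_singleton_iff]
    constructor
    · intro hz
      rcases key z hz with h | h | h | h <;> tauto
    · rintro (rfl | rfl | rfl | rfl)
      · exact ⟨le_refl _, hu.le⟩
      · exact ⟨hu.le, le_refl _⟩
      · exact ⟨hx0, hxu⟩
      · exact ⟨sub_nonneg.mpr hxu, sub_le_self u hx0⟩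
end

section
/- Let G be an abelian lattice-ordered group, u > 0, and x_1, …, x_n elements of [0,u]. Then the condition '(u - x_i) ∧ (x_{i+1} + ⋯ + x_n) = 0 for all 1 ≤ i ≤ n-1' is equivalent to '(u - x_i) ∧ x_{i+1} = 0 for all 1 ≤ i ≤ n-1'. Moreover, if these conditions hold then (u - x_i) ∧ x_j = 0 for all 1 ≤ i < j ≤ n. -/
/-!
Disjointness `a ⊓ b = 0` of positive elements of an ℓ-group is additive in each argument. If
`(u - x i) ⊓ x k = 0` and `(u - x k) ⊓ x (k + 1) = 0`, then `e := (u - x i) ⊓ x (k + 1)` is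
disjoint from both `x k` and `u - x k`, hence from their sum `u ≥ e`, so `e = 0`; induction along
the sequence gives `(u - x i) ⊓ x j = 0` for all `i < j`, and additivity turns this into
disjointness from the tail sums.
-/

theorem inf_eq_zero_of_le_of_le {G : Type*} [Lattice G] [Zero G] {a b c d : G}
    (ha : 0 ≤ a) (hb : 0 ≤ b) (hac : a ≤ c) (hbd : b ≤ d) (h : c ⊓ d = 0) : a ⊓ b = 0 :=
  le_antisymm (h ▸ inf_le_inf hac hbd) (le_inf ha hb)

section LatticeOrderedGroup

variable {G : Type*} [Lattice G] [AddCommGroup G] [AddLeftMono G]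

theorem inf_add_eq_zero {a b c : G} (hb : 0 ≤ b) (hc : 0 ≤ c)
    (hab : a ⊓ b = 0) (hac : a ⊓ c = 0) : a ⊓ (b + c) = 0 := by
  refine le_antisymm ?_ (hab ▸ inf_le_inf_left a (le_add_of_nonneg_right hc))
  have hle_c : a ⊓ (b + c) - b ≤ a ⊓ c :=
    le_inf ((sub_le_self _ hb).trans inf_le_left) (sub_le_iff_le_add'.mpr inf_le_right)
  have hle_b : a ⊓ (b + c) ≤ b := sub_nonpos.mp (hac ▸ hle_c)
  exact hab ▸ le_inf inf_le_left hle_b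

theorem inf_sum_eq_zero {ι : Type*} {a : G} (ha : 0 ≤ a) (s : Finset ι) {f : ι → G}
    (hf : ∀ j ∈ s, 0 ≤ f j) (h : ∀ j ∈ s, a ⊓ f j = 0) : a ⊓ ∑ j ∈ s, f j = 0 := by
  induction s using Finset.cons_induction with
  | empty => simpa using inf_of_le_right ha
  | cons j s hj ih =>
    simp only [Finset.mem_cons, forall_eq_or_imp] at hf h
    rw [Finset.sum_cons]
    exact inf_add_eq_zero hf.1 (Finset.sum_nonneg hf.2) h.1 (ih hf.2 h.2)

theorem eq_zero_of_inf_eq_zero_of_inf_sub_eq_zero {e b u : G} (heu : e ≤ u)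
    (hb : 0 ≤ b) (hbu : b ≤ u) (heb : e ⊓ b = 0) (heb' : e ⊓ (u - b) = 0) : e = 0 := by
  have h := inf_add_eq_zero hb (sub_nonneg.mpr hbu) heb heb'
  rwa [add_sub_cancel, inf_of_le_left heu] at h

theorem inf_eq_zero_of_inf_eq_zero_of_sub_inf_eq_zero {u a b c : G} (ha : 0 ≤ a) (hau : a ≤ u)
    (hb : 0 ≤ b) (hbu : b ≤ u) (hc : 0 ≤ c) (hab : a ⊓ b = 0) (hbc : (u - b) ⊓ c = 0) :
    a ⊓ c = 0 :=
  eq_zero_of_inf_eq_zero_of_inf_sub_eq_zero (inf_le_left.trans hau) hb hbu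
    (inf_eq_zero_of_le_of_le (le_inf ha hc) hb inf_le_left le_rfl hab)
    (inf_eq_zero_of_le_of_le (le_inf ha hc) (sub_nonneg.mpr hbu) inf_le_right le_rfl
      (inf_comm (u - b) c ▸ hbc))

theorem sub_inf_eq_zero_of_lt {u : G} {n : ℕ} {x : Fin n → G}
    (hx : ∀ i, x i ∈ Set.Icc (0 : G) u)
    (hadj : ∀ (i : Fin n) (h : (i : ℕ) + 1 < n), (u - x i) ⊓ x ⟨(i : ℕ) + 1, h⟩ = 0)
    {i j : Fin n} (hij : i < j) : (u - x i) ⊓ x j = 0 := by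
  obtain ⟨j, hj⟩ := j
  induction j with
  | zero => exact absurd (Fin.lt_def.mp hij) (Nat.not_lt_zero _)
  | succ k ih =>
    have hk : k < n := by omega
    rcases (Nat.lt_succ_iff.mp (Fin.lt_def.mp hij)).eq_or_lt with hik | hik
    · obtain rfl : i = ⟨k, hk⟩ := Fin.ext hik
      exact hadj _ hj
    · exact inf_eq_zero_of_inf_eq_zero_of_sub_inf_eq_zero (sub_nonneg.mpr (hx i).2)
        (sub_le_self _ (hx i).1) (hx _).1 (hx _).2 (hx _).1 (ih hk hik) (hadj ⟨k, hk⟩ hj)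

end LatticeOrderedGroup

theorem stmt3_general {G : Type*} [Lattice G] [AddCommGroup G]
    [CovariantClass G G (· + ·) (· ≤ ·)]
    (u : G) (n : ℕ) (x : Fin n → G)
    (hx : ∀ i, x i ∈ Set.Icc (0 : G) u) :
    ((∀ i : Fin n, ∀ h : (i : ℕ) + 1 < n,
        (u - x i) ⊓ (∑ j ∈ Finset.Ioi i, x j) = 0) ↔
      (∀ i : Fin n, ∀ h : (i : ℕ) + 1 < n,
        (u - x i) ⊓ x ⟨(i : ℕ) + 1, h⟩ = 0)) ∧
    ((∀ i : Fin n, ∀ h : (i : ℕ) + 1 < n,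
        (u - x i) ⊓ x ⟨(i : ℕ) + 1, h⟩ = 0) →
      ∀ i j : Fin n, i < j → (u - x i) ⊓ x j = 0) := by
  have hx0 (i : Fin n) : 0 ≤ x i := (hx i).1
  have hcompl (i : Fin n) : 0 ≤ u - x i := sub_nonneg.mpr (hx i).2
  refine ⟨⟨fun htail i h => ?_, fun hadj i _ => ?_⟩, fun hadj _ _ => sub_inf_eq_zero_of_lt hx hadj⟩
  · have hmem : (⟨(i : ℕ) + 1, h⟩ : Fin n) ∈ Finset.Ioi i := by simp [Fin.lt_def]
    exact inf_eq_zero_of_le_of_le (hcompl i) (hx0 _) le_rfl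
      (Finset.single_le_sum (fun k _ => hx0 k) hmem) (htail i h)
  · exact inf_sum_eq_zero (hcompl i) _ (fun k _ => hx0 k)
      fun k hk => sub_inf_eq_zero_of_lt hx hadj (Finset.mem_Ioi.mp hk)

/-- Equivalence of the two formulations of the good-sequence condition, and its
consequence `(u - x_i) ⊓ x_j = 0` for `i < j`. -/
theorem stmt3 {G : Type*} [Lattice G] [AddCommGroup G]
    [CovariantClass G G (· + ·) (· ≤ ·)]
    (u : G) (hu : 0 < u) (n : ℕ) (x : Fin n → G)
    (hx : ∀ i, x i ∈ Set.Icc (0 : G) u) :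
    ((∀ i : Fin n, ∀ h : (i : ℕ) + 1 < n,
        (u - x i) ⊓ (∑ j ∈ Finset.Ioi i, x j) = 0) ↔
      (∀ i : Fin n, ∀ h : (i : ℕ) + 1 < n,
        (u - x i) ⊓ x ⟨(i : ℕ) + 1, h⟩ = 0)) ∧
    ((∀ i : Fin n, ∀ h : (i : ℕ) + 1 < n,
        (u - x i) ⊓ x ⟨(i : ℕ) + 1, h⟩ = 0) →
      ∀ i j : Fin n, i < j → (u - x i) ⊓ x j = 0) :=
  stmt3_general u n x hx
end

section
/- Let (G,<) be a partially ordered abelian group, u > 0 in G, C = G/ℤu the quotient group and ρ : G → C the canonical map. Define R(ρ(x₁),ρ(x₂),ρ(x₃)) iff there exist integers n₂, n₃ with x₁ < x₂ + n₂u < x₃ + n₃u < x₁ + u. Then R is a well-defined ternary relation on C making C a partially cyclically ordered group (R is strict, cyclic, compatible, and each ≤_x is a partial order). -/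
/-- The relation `y ≤_x z` of a partially cyclically ordered group. -/
def cyclicLE {C : Type*} [AddCommGroup C] (R : C → C → C → Prop) (x y z : C) : Prop :=
  R x y z ∨ y = z ∨ y = x

/-- `R` makes the abelian group `C` a partially cyclically ordered group:
`R` is strict, cyclic, compatible, and each `≤_x` is a partial order. -/
def IsPCO {C : Type*} [AddCommGroup C] (R : C → C → C → Prop) : Prop :=
  (∀ x y z : C, R x y z → x ≠ y ∧ y ≠ z ∧ z ≠ x) ∧
  (∀ x y z : C, R x y z → R y z x) ∧
  (∀ x y z v : C, R x y z → R (x + v) (y + v) (z + v)) ∧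
  (∀ x : C, (∀ y z : C, cyclicLE R x y z → cyclicLE R x z y → y = z) ∧
    (∀ y z w : C, cyclicLE R x y z → cyclicLE R x z w → cyclicLE R x y w))

/-- The wound-round relation on `G ⧸ ℤu` is well defined and makes the quotient a
partially cyclically ordered group. -/
theorem stmt10 {G : Type*} [AddCommGroup G] [PartialOrder G]
    [CovariantClass G G (· + ·) (· ≤ ·)]
    (u : G) (hu : 0 < u) :
    let ρ : G → G ⧸ AddSubgroup.zmultiples u := QuotientAddGroup.mk' _
    let R : (G ⧸ AddSubgroup.zmultiples u) → (G ⧸ AddSubgroup.zmultiples u) →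
        (G ⧸ AddSubgroup.zmultiples u) → Prop := fun a b c =>
      ∃ x₁ x₂ x₃ : G, ∃ n₂ n₃ : ℤ, ρ x₁ = a ∧ ρ x₂ = b ∧ ρ x₃ = c ∧
        x₁ < x₂ + n₂ • u ∧ x₂ + n₂ • u < x₃ + n₃ • u ∧ x₃ + n₃ • u < x₁ + u
    (∀ x₁ x₂ x₃ : G, R (ρ x₁) (ρ x₂) (ρ x₃) ↔
      ∃ n₂ n₃ : ℤ, x₁ < x₂ + n₂ • u ∧ x₂ + n₂ • u < x₃ + n₃ • u ∧
        x₃ + n₃ • u < x₁ + u) ∧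
    IsPCO R := by
  intro ρ R
  haveI : IsOrderedAddMonoid G :=
    { add_le_add_left := fun a b h c => add_le_add_left h c }
  have hmono : ∀ m n : ℤ, m ≤ n → (m • u : G) ≤ n • u := by
    intro m n h
    have h0 : (0:G) ≤ (n - m) • u := zsmul_nonneg hu.le (by omega)
    have h1 : m • u + 0 ≤ m • u + (n - m) • u := add_le_add_right h0 _
    rw [add_zero, ← add_zsmul] at h1
    have e : m + (n - m) = n := by omega
    rwa [e] at h1
  have hstrict : ∀ m n : ℤ, (m • u : G) < n • u → m < n := by
    intro m n h
    by_contra hc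
    push_neg at hc
    exact (hmono n m hc).not_gt h
  have hcancel : ∀ (w : G) (m n : ℤ), w + m • u < w + n • u → m < n := by
    intro w m n h
    exact hstrict m n (lt_of_add_lt_add_left h)
  have hrep : ∀ {a b : G}, ρ a = ρ b → ∃ k : ℤ, b = a + k • u := by
    intro a b h
    obtain ⟨z, hz, hzy⟩ := (QuotientAddGroup.mk'_eq_mk' _).mp h
    obtain ⟨k, rfl⟩ := AddSubgroup.mem_zmultiples_iff.mp hz
    exact ⟨k, hzy.symm⟩
  -- the key characterization
  have key : ∀ x₁ x₂ x₃ : G, R (ρ x₁) (ρ x₂) (ρ x₃) ↔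
      ∃ n₂ n₃ : ℤ, x₁ < x₂ + n₂ • u ∧ x₂ + n₂ • u < x₃ + n₃ • u ∧
        x₃ + n₃ • u < x₁ + u := by
    intro x₁ x₂ x₃
    constructor
    · rintro ⟨y₁, y₂, y₃, n₂, n₃, e₁, e₂, e₃, h1, h2, h3⟩
      obtain ⟨k₁, rfl⟩ := hrep e₁
      obtain ⟨k₂, rfl⟩ := hrep e₂
      obtain ⟨k₃, rfl⟩ := hrep e₃
      refine ⟨n₂ - k₂ + k₁, n₃ - k₃ + k₁, ?_, ?_, ?_⟩
      · have E : y₂ + k₂ • u + (n₂ - k₂ + k₁) • u = (y₂ + n₂ • u) + k₁ • u := by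
          rw [add_zsmul, sub_zsmul]; abel
        rw [E]
        exact add_lt_add_left h1 _
      · have E2 : y₂ + k₂ • u + (n₂ - k₂ + k₁) • u = (y₂ + n₂ • u) + k₁ • u := by
          rw [add_zsmul, sub_zsmul]; abel
        have E3 : y₃ + k₃ • u + (n₃ - k₃ + k₁) • u = (y₃ + n₃ • u) + k₁ • u := by
          rw [add_zsmul, sub_zsmul]; abel
        rw [E2, E3]
        exact add_lt_add_left h2 _
      · have E3 : y₃ + k₃ • u + (n₃ - k₃ + k₁) • u = (y₃ + n₃ • u) + k₁ • u := by
          rw [add_zsmul, sub_zsmul]; abel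
        have E1 : y₁ + k₁ • u + u = (y₁ + u) + k₁ • u := by abel
        rw [E3, E1]
        exact add_lt_add_left h3 _
    · rintro ⟨n₂, n₃, h1, h2, h3⟩
      exact ⟨x₁, x₂, x₃, n₂, n₃, rfl, rfl, rfl, h1, h2, h3⟩
  -- strictness
  have hstrictR : ∀ A B C, R A B C → A ≠ B ∧ B ≠ C ∧ C ≠ A := by
    rintro A B C h
    obtain ⟨x, rfl⟩ := QuotientAddGroup.mk'_surjective _ A
    obtain ⟨y, rfl⟩ := QuotientAddGroup.mk'_surjective _ B
    obtain ⟨z, rfl⟩ := QuotientAddGroup.mk'_surjective _ C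
    obtain ⟨a, b, h1, h2, h3⟩ := (key x y z).mp h
    refine ⟨?_, ?_, ?_⟩
    · intro he
      obtain ⟨k, rfl⟩ := hrep he
      rw [add_assoc, ← add_zsmul] at h1 h2
      have l1 : 0 < k + a := by
        have : x + (0:ℤ) • u < x + (k + a) • u := by simpa using h1
        exact hcancel _ _ _ this
      have l2 : k + a < 1 := by
        have : x + (k + a) • u < x + (1:ℤ) • u := by
          rw [one_zsmul]; exact h2.trans h3
        exact hcancel _ _ _ this
      omega
    · intro he
      obtain ⟨k, rfl⟩ := hrep he
      rw [add_assoc, ← add_zsmul] at h2 h3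
      have l1 : a < k + b := hcancel y _ _ h2
      have l2 : k + b < a + 1 := by
        have : y + (k + b) • u < y + (a + 1) • u := by
          have E : y + (a + 1) • u = (y + a • u) + u := by
            rw [add_zsmul, one_zsmul]; abel
          rw [E]
          exact h3.trans (add_lt_add_left h1 u)
        exact hcancel _ _ _ this
      omega
    · intro he
      obtain ⟨k, rfl⟩ := hrep he
      have l1 : b < k + 1 := by
        have : z + b • u < z + (k + 1) • u := by
          have E : z + (k + 1) • u = (z + k • u) + u := by
            rw [add_zsmul, one_zsmul]; abel
          rw [E]; exact h3
        exact hcancel _ _ _ this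
      have l2 : k < b := by
        have : z + k • u < z + b • u := h1.trans h2
        exact hcancel _ _ _ this
      omega
  -- cyclicity
  have hcyc : ∀ A B C, R A B C → R B C A := by
    rintro A B C h
    obtain ⟨x, rfl⟩ := QuotientAddGroup.mk'_surjective _ A
    obtain ⟨y, rfl⟩ := QuotientAddGroup.mk'_surjective _ B
    obtain ⟨z, rfl⟩ := QuotientAddGroup.mk'_surjective _ C
    obtain ⟨a, b, h1, h2, h3⟩ := (key x y z).mp h
    refine (key y z x).mpr ⟨b - a, 1 - a, ?_, ?_, ?_⟩
    · have E : z + b • u = (z + (b - a) • u) + a • u := by rw [sub_zsmul]; abel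
      rw [E] at h2
      exact lt_of_add_lt_add_right h2
    · have E : z + b • u = (z + (b - a) • u) + a • u := by rw [sub_zsmul]; abel
      have E' : x + u = (x + (1 - a) • u) + a • u := by rw [sub_zsmul, one_zsmul]; abel
      rw [E, E'] at h3
      exact lt_of_add_lt_add_right h3
    · have E : x + (1 - a) • u = x + (u - a • u) := by rw [sub_zsmul, one_zsmul]; abel
      have E' : (y + a • u) + (u - a • u) = y + u := by abel
      rw [E, ← E']
      exact add_lt_add_left h1 (u - a • u)
  -- compatibility
  have hρ : ∀ a b : G, ρ a + ρ b = ρ (a + b) := fun a b => (map_add _ a b).symm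
  have hcompat : ∀ A B C V, R A B C → R (A + V) (B + V) (C + V) := by
    rintro A B C V h
    obtain ⟨x, rfl⟩ := QuotientAddGroup.mk'_surjective _ A
    obtain ⟨y, rfl⟩ := QuotientAddGroup.mk'_surjective _ B
    obtain ⟨z, rfl⟩ := QuotientAddGroup.mk'_surjective _ C
    obtain ⟨v, rfl⟩ := QuotientAddGroup.mk'_surjective _ V
    obtain ⟨a, b, h1, h2, h3⟩ := (key x y z).mp h
    show R (ρ x + ρ v) (ρ y + ρ v) (ρ z + ρ v)
    rw [hρ, hρ, hρ]
    refine (key (x + v) (y + v) (z + v)).mpr ⟨a, b, ?_, ?_, ?_⟩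
    · have E : (y + v) + a • u = (y + a • u) + v := by abel
      rw [E]; exact add_lt_add_left h1 v
    · have E : (y + v) + a • u = (y + a • u) + v := by abel
      have E' : (z + v) + b • u = (z + b • u) + v := by abel
      rw [E, E']; exact add_lt_add_left h2 v
    · have E' : (z + v) + b • u = (z + b • u) + v := by abel
      have E'' : (x + v) + u = (x + u) + v := by abel
      rw [E', E'']; exact add_lt_add_left h3 v
  refine ⟨key, hstrictR, hcyc, hcompat, ?_⟩
  intro X
  constructor
  · -- antisymmetry
    intro B C h1 h2
    rcases h1 with h1 | h1 | h1
    · rcases h2 with h2 | h2 | h2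
      · -- main contradiction
        exfalso
        obtain ⟨x, rfl⟩ := QuotientAddGroup.mk'_surjective _ X
        obtain ⟨y, rfl⟩ := QuotientAddGroup.mk'_surjective _ B
        obtain ⟨z, rfl⟩ := QuotientAddGroup.mk'_surjective _ C
        obtain ⟨a, b, g1, g2, g3⟩ := (key x y z).mp h1
        obtain ⟨c, d, f1, f2, f3⟩ := (key x z y).mp h2
        have hda : d < a + 1 := by
          have : y + d • u < y + (a + 1) • u := by
            have E : y + (a + 1) • u = (y + a • u) + u := by
              rw [add_zsmul, one_zsmul]; abel
            rw [E]
            exact f3.trans (add_lt_add_left g1 u)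
          exact hcancel _ _ _ this
        have hbc : b < c + 1 := by
          have : z + b • u < z + (c + 1) • u := by
            have E : z + (c + 1) • u = (z + c • u) + u := by
              rw [add_zsmul, one_zsmul]; abel
            rw [E]
            exact g3.trans (add_lt_add_left f1 u)
          exact hcancel _ _ _ this
        have c1 : z + b • u ≤ z + c • u := add_le_add_right (hmono b c (by omega)) z
        have c2 : y + d • u ≤ y + a • u := add_le_add_right (hmono d a (by omega)) y
        exact absurd ((g2.trans_le c1).trans (f2.trans_le c2)) (lt_irrefl _)
      · exact h2.symm
      · subst h2
        exact absurd rfl (hstrictR _ _ _ h1).2.2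
    · exact h1
    · subst h1
      rcases h2 with h2 | h2 | h2
      · exact absurd rfl (hstrictR _ _ _ h2).2.2
      · exact h2.symm
      · exact h2.symm
  · -- transitivity
    intro B C W h1 h2
    rcases h1 with h1 | h1 | h1
    · rcases h2 with h2 | h2 | h2
      · left
        obtain ⟨x, rfl⟩ := QuotientAddGroup.mk'_surjective _ X
        obtain ⟨y, rfl⟩ := QuotientAddGroup.mk'_surjective _ B
        obtain ⟨z, rfl⟩ := QuotientAddGroup.mk'_surjective _ C
        obtain ⟨w, rfl⟩ := QuotientAddGroup.mk'_surjective _ W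
        obtain ⟨a, b, g1, g2, g3⟩ := (key x y z).mp h1
        obtain ⟨c, d, f1, f2, f3⟩ := (key x z w).mp h2
        have hbc : b < c + 1 := by
          have : z + b • u < z + (c + 1) • u := by
            have E : z + (c + 1) • u = (z + c • u) + u := by
              rw [add_zsmul, one_zsmul]; abel
            rw [E]
            exact g3.trans (add_lt_add_left f1 u)
          exact hcancel _ _ _ this
        have c1 : z + b • u ≤ z + c • u := add_le_add_right (hmono b c (by omega)) z
        exact (key x y w).mpr ⟨a, d, g1, (g2.trans_le c1).trans f2, f3⟩
      · subst h2; exact Or.inl h1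
      · subst h2
        exact absurd rfl (hstrictR _ _ _ h1).2.2.elim
    · subst h1; exact h2
    · subst h1; exact Or.inr (Or.inr rfl)
end

section
/- Let (G,u) be a partially ordered abelian group with strong unit u > 0, C = G/ℤu with the wound-round partial cyclic order, and ρ : G → C the canonical map. Let G_u = {x ∈ G | x ≥ 0 and ¬(x ≥ u)}. Then the restriction of ρ to G_u is a bijection onto C. -/
/-- For a partially ordered abelian group with strong unit `u`, the canonical map
`G → G ⧸ ℤu` restricts to a bijection from `G_u = {x | 0 ≤ x ∧ ¬ u ≤ x}` onto the
quotient. -/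
theorem stmt11 {G : Type*} [AddCommGroup G] [PartialOrder G]
    [CovariantClass G G (· + ·) (· ≤ ·)]
    (u : G) (hu : 0 < u) (hsu : ∀ g : G, ∃ n : ℕ, g ≤ n • u) :
    Set.BijOn (QuotientAddGroup.mk' (AddSubgroup.zmultiples u))
      {x : G | 0 ≤ x ∧ ¬ u ≤ x} Set.univ := by
  classical
  -- `0 ≤ m • u` for `0 ≤ m`
  have key : ∀ m : ℤ, 0 ≤ m → 0 ≤ m • u := by
    intro m hm
    lift m to ℕ using hm
    rw [natCast_zsmul]
    induction m with
    | zero => simp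
    | succ n ih => rw [succ_nsmul]; exact add_nonneg ih hu.le
  have mono : ∀ m n : ℤ, m ≤ n → m • u ≤ n • u := by
    intro m n hmn
    have h3 : m + (n - m) = n := by omega
    calc m • u ≤ m • u + (n - m) • u := le_add_of_nonneg_right (key _ (by omega))
      _ = n • u := by rw [← add_zsmul, h3]
  have strict : ∀ m n : ℤ, m • u ≤ n • u → m ≤ n := by
    intro m n h
    by_contra hc
    push_neg at hc
    have h1 : (n + 1) • u ≤ m • u := mono _ _ (by omega)
    have h2 : n • u + u ≤ n • u + 0 := by
      have := (h1.trans h).trans_eq (add_zero (n • u)).symm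
      rwa [add_zsmul, one_zsmul] at this
    exact absurd (le_of_add_le_add_left h2) hu.not_ge
  refine ⟨fun x _ => trivial, ?_, ?_⟩
  · rintro x ⟨hx0, hxu⟩ y ⟨hy0, hyu⟩ hxy
    have hmem : x - y ∈ AddSubgroup.zmultiples u := by
      rw [← QuotientAddGroup.eq_iff_sub_mem]
      exact hxy
    rw [AddSubgroup.mem_zmultiples_iff] at hmem
    obtain ⟨m, hm⟩ := hmem
    rcases lt_trichotomy m 0 with h | h | h
    · exfalso
      apply hyu
      have h1 : u ≤ (-m) • u := by simpa using mono 1 (-m) (by omega)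
      have h2 : (-m) • u = y - x := by rw [neg_zsmul, hm]; abel
      calc u ≤ y - x := h2 ▸ h1
        _ ≤ y - 0 := sub_le_sub_left hx0 y
        _ = y := by simp
    · rw [h, zero_zsmul] at hm
      exact (sub_eq_zero.mp hm.symm)
    · exfalso
      apply hxu
      have h1 : u ≤ m • u := by simpa using mono 1 m (by omega)
      calc u ≤ m • u := h1
        _ = x - y := hm
        _ ≤ x - 0 := sub_le_sub_left hy0 x
        _ = x := by simp
  · rintro q -
    induction q using QuotientAddGroup.induction_on with
    | H g =>
      have hbdd : ∃ b : ℤ, ∀ z : ℤ, z • u ≤ g → z ≤ b := by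
        obtain ⟨n, hn⟩ := hsu g
        exact ⟨n, fun z hz => strict z n (hz.trans (by simpa using hn))⟩
      have hinh : ∃ z : ℤ, z • u ≤ g := by
        obtain ⟨n, hn⟩ := hsu (-g)
        refine ⟨-(n : ℤ), ?_⟩
        have : -(n • u) ≤ g := neg_le.mp hn
        calc (-(n:ℤ)) • u = -((n:ℤ) • u) := by rw [neg_zsmul]
          _ = -((n:ℕ) • u) := by rw [natCast_zsmul]
          _ ≤ g := this
      obtain ⟨k, hk, hmax⟩ := Int.exists_greatest_of_bdd hbdd hinh
      refine ⟨g - k • u, ⟨sub_nonneg.mpr hk, ?_⟩, ?_⟩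
      · intro hle
        have h2 : (k + 1) • u ≤ g := by
          have := add_le_add_left hle (k • u)
          rw [sub_add_cancel] at this
          calc (k+1) • u = u + k • u := by rw [add_zsmul, one_zsmul, add_comm]
            _ ≤ g := this
        exact absurd (hmax _ h2) (by omega)
      · simp only [QuotientAddGroup.mk'_apply]
        rw [QuotientAddGroup.eq_iff_sub_mem]
        exact AddSubgroup.mem_zmultiples_iff.mpr ⟨-k, by rw [neg_zsmul]; abel⟩
end

section
/- Let G be a partially ordered abelian group, u > 0, and define H = {x ∈ G | ∃ m, n ∈ ℤ, m·u ≤ x ≤ n·u}. Then H is a subgroup of G and u is a strong unit of H. Moreover, if the class ρ(x) of x in G/ℤu is a non-isolated element of the wound-round partial cyclic order, then x ∈ H. -/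
private lemma smul_mono_aux {G : Type*} [AddCommGroup G] [PartialOrder G]
    [CovariantClass G G (· + ·) (· ≤ ·)] {u : G} (hu : 0 ≤ u) {m n : ℤ}
    (h : m ≤ n) : m • u ≤ n • u := by
  have h1 : (0:G) ≤ (n - m) • u := zsmul_nonneg hu (by omega)
  have := add_le_add_left h1 (m • u)
  simpa [← add_zsmul] using this

/-- `H = {x | ∃ m n : ℤ, m•u ≤ x ≤ n•u}` is a subgroup of `G` with strong unit `u`,
and every `x` whose class mod `ℤu` is non-isolated belongs to `H`. -/
theorem stmt13 {G : Type*} [AddCommGroup G] [PartialOrder G]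
    [CovariantClass G G (· + ·) (· ≤ ·)]
    (u : G) (hu : 0 < u) :
    ∃ H : AddSubgroup G,
      (H : Set G) = {x : G | ∃ m n : ℤ, m • u ≤ x ∧ x ≤ n • u} ∧
      u ∈ H ∧ (∀ h ∈ H, ∃ n : ℕ, h ≤ n • u) ∧
      (∀ x : G, (∃ y : G, ∃ n n' : ℤ,
          (0 < x + n • u ∧ x + n • u < y + n' • u ∧ y + n' • u < u) ∨
          (0 < y + n' • u ∧ y + n' • u < x + n • u ∧ x + n • u < u)) →
        x ∈ H) := by
  refine ⟨{
    carrier := {x : G | ∃ m n : ℤ, m • u ≤ x ∧ x ≤ n • u}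
    zero_mem' := ⟨0, 0, by simp, by simp⟩
    add_mem' := ?_
    neg_mem' := ?_ }, rfl, ⟨1, 1, by simp, by simp⟩, ?_, ?_⟩
  · rintro a b ⟨m, n, h1, h2⟩ ⟨m', n', h3, h4⟩
    exact ⟨m + m', n + n', by rw [add_zsmul]; exact add_le_add h1 h3,
      by rw [add_zsmul]; exact add_le_add h2 h4⟩
  · rintro a ⟨m, n, h1, h2⟩
    refine ⟨-n, -m, ?_, ?_⟩
    · have := add_le_add_left h2 (-(n • u) + -a)
      simpa [neg_zsmul, add_assoc, add_comm, add_left_comm] using this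
    · have := add_le_add_left h1 (-(m • u) + -a)
      simpa [neg_zsmul, add_assoc, add_comm, add_left_comm] using this
  · rintro h ⟨m, n, h1, h2⟩
    refine ⟨n.toNat, le_trans h2 ?_⟩
    have := smul_mono_aux hu.le (n := (n.toNat : ℤ)) (Int.self_le_toNat n)
    rwa [natCast_zsmul] at this
  · rintro x ⟨y, n, n', (⟨h1, h2, h3⟩ | ⟨h1, h2, h3⟩)⟩ <;>
    · have hpos : 0 < x + n • u := by first | exact h1 | exact h1.trans h2
      have hlt : x + n • u < u := by first | exact h2.trans h3 | exact h3
      refine ⟨-n, 1 - n, ?_, ?_⟩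
      · have := add_lt_add_right hpos (-(n • u))
        rw [neg_zsmul]
        simpa [add_assoc] using this.le
      · have := add_lt_add_right hlt (-(n • u))
        rw [sub_zsmul, one_zsmul]
        exact (sub_eq_add_neg u (n • u)) ▸ le_sub_iff_add_le.mpr hlt.le
end

section
/- Let (G,u) be a partially ordered abelian group with strong unit u, let N = {x ∈ G | 0 < x < u and ∃ y with 0 < y < u and (x < y or y < x)}, and let C = G/ℤu be the wound-round partially cyclically ordered group with A(C) its set of non-isolated elements. Then the canonical map ρ restricts to an order isomorphism between (N, <) and (A(C) \ {0}, <_0). -/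
/-- For a partially ordered abelian group with strong unit `u`, the canonical map
restricts to an order isomorphism between
`N = {x | 0 < x < u ∧ ∃ y, 0 < y < u ∧ (x < y ∨ y < x)}` and the nonzero
non-isolated elements of the wound-round `G ⧸ ℤu`. -/
theorem stmt15 {G : Type*} [AddCommGroup G] [PartialOrder G]
    [CovariantClass G G (· + ·) (· ≤ ·)]
    (u : G) (hu : 0 < u) (hsu : ∀ g : G, ∃ n : ℕ, g ≤ n • u) :
    let ρ : G → G ⧸ AddSubgroup.zmultiples u := QuotientAddGroup.mk' _
    let R : (G ⧸ AddSubgroup.zmultiples u) → (G ⧸ AddSubgroup.zmultiples u) →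
        (G ⧸ AddSubgroup.zmultiples u) → Prop := fun a b c =>
      ∃ x₁ x₂ x₃ : G, ∃ n₂ n₃ : ℤ, ρ x₁ = a ∧ ρ x₂ = b ∧ ρ x₃ = c ∧
        x₁ < x₂ + n₂ • u ∧ x₂ + n₂ • u < x₃ + n₃ • u ∧ x₃ + n₃ • u < x₁ + u
    let A : Set (G ⧸ AddSubgroup.zmultiples u) :=
      {x | x = 0 ∨ ∃ y ≠ 0, R 0 x y ∨ R 0 y x}
    let N : Set G :=
      {x | 0 < x ∧ x < u ∧ ∃ y : G, 0 < y ∧ y < u ∧ (x < y ∨ y < x)}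
    Set.BijOn ρ N (A \ {0}) ∧
    (∀ x ∈ N, ∀ y ∈ N, (x < y ↔ R 0 (ρ x) (ρ y))) := by
  haveI : IsOrderedAddMonoid G :=
    { add_le_add_left := fun a b h c => by
        rw [add_comm a c, add_comm b c]; exact CovariantClass.elim c h }
  intro ρ R A N
  -- a multiple of u strictly between -u and u is zero
  have hn0 : ∀ n : ℤ, -u < n • u → n • u < u → n = 0 := by
    intro n h1 h2
    by_contra hne
    rcases lt_or_gt_of_ne hne with h | h
    · have h' : n ≤ -1 := by omega
      have hle : n • u ≤ (-1 : ℤ) • u := zsmul_le_zsmul_left hu.le h'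
      rw [neg_smul, one_zsmul] at hle
      exact absurd (lt_of_lt_of_le h1 hle) (lt_irrefl _)
    · have h' : (1 : ℤ) ≤ n := h
      have hle : (1 : ℤ) • u ≤ n • u := zsmul_le_zsmul_left hu.le h'
      rw [one_zsmul] at hle
      exact absurd (lt_of_le_of_lt hle h2) (lt_irrefl _)
  have hrho : ∀ x y : G, ρ x = ρ y ↔ x - y ∈ AddSubgroup.zmultiples u := by
    intro x y
    simp only [ρ, QuotientAddGroup.mk'_apply]
    rw [QuotientAddGroup.eq_iff_sub_mem]
  have hρ0 : ∀ x : G, ρ x = 0 ↔ x ∈ AddSubgroup.zmultiples u := by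
    intro x
    simp only [ρ, QuotientAddGroup.mk'_apply, QuotientAddGroup.eq_zero_iff]
  -- uniqueness of representatives in (0, u)
  have huniq : ∀ x y : G, 0 < x → x < u → 0 < y → y < u → ρ x = ρ y → x = y := by
    intro x y hx1 hx2 hy1 hy2 h
    obtain ⟨n, hn⟩ := AddSubgroup.mem_zmultiples_iff.mp ((hrho x y).mp h)
    have h1 : -u < n • u := by
      rw [hn]
      calc -u < -y := neg_lt_neg hy2
        _ = 0 - y := (zero_sub y).symm
        _ < x - y := sub_lt_sub_right hx1 y
    have h2 : n • u < u := by
      rw [hn]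
      calc x - y < x - 0 := sub_lt_sub_left hy1 x
        _ = x := sub_zero x
        _ < u := hx2
    have := hn0 n h1 h2
    subst this
    rw [zero_smul] at hn
    exact (sub_eq_zero.mp hn.symm)
  have hne0 : ∀ x : G, 0 < x → x < u → ρ x ≠ 0 := by
    intro x hx1 hx2 h
    obtain ⟨n, hn⟩ := AddSubgroup.mem_zmultiples_iff.mp ((hρ0 x).mp h)
    have := hn0 n (by rw [hn]; exact lt_trans (neg_lt_zero.mpr hu) hx1) (by rw [hn]; exact hx2)
    subst this
    rw [zero_smul] at hn
    exact absurd hn.symm hx1.ne'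
  -- simplified characterization of R 0 a b
  have hR : ∀ a b, R 0 a b ↔ ∃ x y : G, ρ x = a ∧ ρ y = b ∧ 0 < x ∧ x < y ∧ y < u := by
    intro a b
    constructor
    · rintro ⟨x₁, x₂, x₃, n₂, n₃, h1, h2, h3, h4, h5, h6⟩
      obtain ⟨m, hm⟩ := AddSubgroup.mem_zmultiples_iff.mp ((hρ0 x₁).mp h1)
      refine ⟨x₂ + n₂ • u - m • u, x₃ + n₃ • u - m • u, ?_, ?_, ?_, ?_, ?_⟩
      · rw [← h2, hrho]
        exact ⟨n₂ - m, by show (n₂ - m) • u = _; rw [sub_smul]; abel⟩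
      · rw [← h3, hrho]
        exact ⟨n₃ - m, by show (n₃ - m) • u = _; rw [sub_smul]; abel⟩
      · rw [← hm] at h4; exact sub_pos.mpr h4
      · exact sub_lt_sub_right h5 (m • u)
      · rw [← hm] at h6
        exact sub_lt_iff_lt_add'.mpr h6
    · rintro ⟨x, y, ha, hb, h1, h2, h3⟩
      refine ⟨0, x, y, 0, 0, ?_, by simpa using ha, by simpa using hb, by simpa using h1,
        by simpa using h2, by simpa using h3⟩
      simp [ρ]
  constructor
  · refine ⟨?_, ?_, ?_⟩
    · -- maps to
      rintro x ⟨hx1, hx2, y, hy1, hy2, hxy⟩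
      refine ⟨?_, hne0 x hx1 hx2⟩
      right
      refine ⟨ρ y, hne0 y hy1 hy2, ?_⟩
      rcases hxy with h | h
      · exact Or.inl ((hR _ _).mpr ⟨x, y, rfl, rfl, hx1, h, hy2⟩)
      · exact Or.inr ((hR _ _).mpr ⟨y, x, rfl, rfl, hy1, h, hx2⟩)
    · -- injective
      rintro x ⟨hx1, hx2, -⟩ y ⟨hy1, hy2, -⟩ h
      exact huniq x y hx1 hx2 hy1 hy2 h
    · -- surjective
      rintro a ⟨ha, ha0⟩
      rcases ha with h | ⟨b, hb, hab | hab⟩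
      · exact absurd h ha0
      · obtain ⟨x, y, hx, hy, h1, h2, h3⟩ := (hR _ _).mp hab
        exact ⟨x, ⟨h1, lt_trans h2 h3, y, lt_trans h1 h2, h3, Or.inl h2⟩, hx⟩
      · obtain ⟨x, y, hx, hy, h1, h2, h3⟩ := (hR _ _).mp hab
        exact ⟨y, ⟨lt_trans h1 h2, h3, x, h1, lt_trans h2 h3, Or.inr h2⟩, hy⟩
  · rintro x ⟨hx1, hx2, -⟩ y ⟨hy1, hy2, -⟩
    constructor
    · intro h
      exact (hR _ _).mpr ⟨x, y, rfl, rfl, hx1, h, hy2⟩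
    · intro h
      obtain ⟨x', y', hx', hy', h1, h2, h3⟩ := (hR _ _).mp h
      have ex : x' = x := huniq x' x h1 (lt_trans h2 h3) hx1 hx2 hx'
      have ey : y' = y := huniq y' y (lt_trans h1 h2) h3 hy1 hy2 hy'
      rw [← ex, ← ey]; exact h2
end

section
/- Let C be a partially cyclically ordered abelian group such that for all nonzero non-isolated x, y: x <_0 y ⟺ -y <_0 -x. Suppose x, y are non-isolated and their infimum z = x ∧_0 y in (A(C), ≤_0) exists. Then x - z and y - z are non-isolated, and the infimum (x - z) ∧_0 (y - z) exists and equals 0. -/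
/-- The set `A(C)` of non-isolated elements of `C` (together with `0`). -/
def nonIsol {C : Type*} [AddCommGroup C] (R : C → C → C → Prop) : Set C :=
  {x | x = 0 ∨ ∃ y ≠ (0 : C), R 0 x y ∨ R 0 y x}

/-- `z` is the infimum of `a` and `b` in `(A(C), ≤₀)`. -/
def IsInf0 {C : Type*} [AddCommGroup C] (R : C → C → C → Prop) (a b z : C) : Prop :=
  z ∈ nonIsol R ∧ cyclicLE R 0 z a ∧ cyclicLE R 0 z b ∧
    ∀ w ∈ nonIsol R, cyclicLE R 0 w a → cyclicLE R 0 w b → cyclicLE R 0 w z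

/-!
Translation by `z` carries `0 <₀ a - z <₀ -z` onto `z <₀ a <₀ 0`, so when `z <₀ x` and `z <₀ y` the
element `-z` lies strictly above `x - z` and `y - z`. A nonzero `w ≤₀ x - z, y - z` then satisfies
`w <₀ -z`, i.e. `z <₀ w + z`, while `w + z ≤₀ x, y`, contradicting `z = x ∧₀ y`. The cases
`z ∈ {0, x, y}` are immediate.
-/

theorem R_of_cyclicLE {C : Type*} [AddCommGroup C] {R : C → C → C → Prop} {a b c : C}
    (h : cyclicLE R a b c) (hbc : b ≠ c) (hba : b ≠ a) : R a b c := by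
  rcases h with h | h | h
  · exact h
  · exact absurd h hbc
  · exact absurd h hba

namespace IsPCO

variable {C : Type*} [AddCommGroup C] {R : C → C → C → Prop}

theorem ne_of_R (hR : IsPCO R) {a b c : C} (h : R a b c) : a ≠ b ∧ b ≠ c ∧ c ≠ a :=
  hR.1 a b c h

theorem rotate (hR : IsPCO R) {a b c : C} (h : R a b c) : R b c a :=
  hR.2.1 a b c h

theorem add_right (hR : IsPCO R) {a b c : C} (v : C) (h : R a b c) :
    R (a + v) (b + v) (c + v) :=
  hR.2.2.1 a b c v h

theorem cyclicLE_antisymm (hR : IsPCO R) {a b c : C} (hbc : cyclicLE R a b c)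
    (hcb : cyclicLE R a c b) : b = c :=
  (hR.2.2.2 a).1 b c hbc hcb

theorem cyclicLE_trans (hR : IsPCO R) {a b c d : C} (hbc : cyclicLE R a b c)
    (hcd : cyclicLE R a c d) : cyclicLE R a b d :=
  (hR.2.2.2 a).2 b c d hbc hcd

theorem not_R_swap (hR : IsPCO R) {a b c : C} (h : R a b c) : ¬R a c b := fun h' =>
  (hR.ne_of_R h).2.1 (hR.cyclicLE_antisymm (Or.inl h) (Or.inl h'))

theorem R_trans (hR : IsPCO R) {a b c d : C} (hbc : R a b c) (hcd : R a c d) : R a b d := by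
  rcases hR.cyclicLE_trans (Or.inl hbc) (Or.inl hcd) with h | rfl | rfl
  · exact h
  · exact absurd hcd (hR.not_R_swap hbc)
  · exact absurd rfl (hR.ne_of_R hbc).1

theorem eq_zero_of_cyclicLE_zero (hR : IsPCO R) {w : C} (h : cyclicLE R 0 w 0) : w = 0 := by
  by_contra hw
  exact (hR.ne_of_R (R_of_cyclicLE h hw hw)).2.2 rfl

theorem mem_nonIsol_of_R (hR : IsPCO R) {w a : C} (h : R 0 w a) : w ∈ nonIsol R :=
  Or.inr ⟨a, (hR.ne_of_R h).2.2, Or.inl h⟩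

theorem R_sub_neg (hR : IsPCO R) {z a : C} (h : R 0 z a) : R 0 (a - z) (-z) := by
  have h' := hR.add_right (-z) h
  rw [zero_add, add_neg_cancel, ← sub_eq_add_neg] at h'
  exact hR.rotate h'

theorem R_add_of_R_neg (hR : IsPCO R) {z w : C} (h : R 0 w (-z)) : R 0 z (w + z) := by
  have h' := hR.add_right z h
  rw [zero_add, neg_add_cancel] at h'
  exact hR.rotate (hR.rotate h')

theorem R_add_of_R_sub (hR : IsPCO R) {z a w : C} (hza : R 0 z a) (hw : R 0 w (a - z)) :
    R 0 (w + z) a := by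
  have h := hR.add_right z hw
  rw [zero_add, sub_add_cancel] at h
  exact hR.rotate (hR.R_trans (hR.rotate (hR.rotate hza)) (hR.rotate (hR.rotate h)))

theorem cyclicLE_add_of_cyclicLE_sub (hR : IsPCO R) {z a w : C} (hza : R 0 z a) (hw0 : w ≠ 0)
    (hw : cyclicLE R 0 w (a - z)) : cyclicLE R 0 (w + z) a := by
  rcases hw with hw | rfl | rfl
  · exact Or.inl (hR.R_add_of_R_sub hza hw)
  · exact Or.inr (Or.inl (sub_add_cancel a z))
  · exact absurd rfl hw0

theorem sub_mem_nonIsol (hR : IsPCO R) {z a : C} (ha : a ∈ nonIsol R) (hza : cyclicLE R 0 z a) :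
    a - z ∈ nonIsol R := by
  rcases hza with h | rfl | rfl
  · exact hR.mem_nonIsol_of_R (hR.R_sub_neg h)
  · exact Or.inl (sub_self z)
  · rwa [sub_zero]

theorem eq_zero_of_isInf0_of_R (hR : IsPCO R) {x y z w : C} (hz : IsInf0 R x y z)
    (hzx : R 0 z x) (hzy : R 0 z y) (hwx : cyclicLE R 0 w (x - z))
    (hwy : cyclicLE R 0 w (y - z)) : w = 0 := by
  by_contra hw0
  have hx_neg : R 0 (x - z) (-z) := hR.R_sub_neg hzx
  obtain rfl | hwz := eq_or_ne w (-z)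
  · have hxz : -z ≠ x - z := fun h => (hR.ne_of_R hzx).2.2 (sub_eq_neg_self.mp h.symm)
    exact hR.not_R_swap hx_neg (R_of_cyclicLE hwx hxz hw0)
  have hw_neg : R 0 w (-z) := R_of_cyclicLE (hR.cyclicLE_trans hwx (Or.inl hx_neg)) hwz hw0
  have hz_lt : R 0 z (w + z) := hR.R_add_of_R_neg hw_neg
  have hmem : w + z ∈ nonIsol R := Or.inr ⟨z, (hR.ne_of_R hzx).1.symm, Or.inr hz_lt⟩
  have hle : cyclicLE R 0 (w + z) z := hz.2.2.2 (w + z) hmem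
    (hR.cyclicLE_add_of_cyclicLE_sub hzx hw0 hwx) (hR.cyclicLE_add_of_cyclicLE_sub hzy hw0 hwy)
  exact hw0 (add_eq_right.mp (hR.cyclicLE_antisymm hle (Or.inl hz_lt)))

theorem eq_zero_of_isInf0_of_cyclicLE_sub (hR : IsPCO R) {x y z w : C} (hz : IsInf0 R x y z)
    (hw : w ∈ nonIsol R) (hwx : cyclicLE R 0 w (x - z)) (hwy : cyclicLE R 0 w (y - z)) :
    w = 0 := by
  obtain rfl | hz0 := eq_or_ne z 0
  · rw [sub_zero] at hwx hwy
    exact hR.eq_zero_of_cyclicLE_zero (hz.2.2.2 w hw hwx hwy)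
  rcases hz.2.1 with hzx | rfl | rfl
  · rcases hz.2.2.1 with hzy | rfl | rfl
    · exact hR.eq_zero_of_isInf0_of_R hz hzx hzy hwx hwy
    · exact hR.eq_zero_of_cyclicLE_zero (sub_self z ▸ hwy)
    · exact absurd rfl hz0
  · exact hR.eq_zero_of_cyclicLE_zero (sub_self z ▸ hwx)
  · exact absurd rfl hz0

end IsPCO

theorem stmt17_general {C : Type*} [AddCommGroup C] (R : C → C → C → Prop)
    (hR : IsPCO R)
    (x y z : C) (hx : x ∈ nonIsol R) (hy : y ∈ nonIsol R)
    (hz : IsInf0 R x y z) :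
    x - z ∈ nonIsol R ∧ y - z ∈ nonIsol R ∧ IsInf0 R (x - z) (y - z) 0 :=
  ⟨hR.sub_mem_nonIsol hx hz.2.1, hR.sub_mem_nonIsol hy hz.2.2.1, Or.inl rfl,
    Or.inr (Or.inr rfl), Or.inr (Or.inr rfl),
    fun _ hw hwx hwy => Or.inr (Or.inl (hR.eq_zero_of_isInf0_of_cyclicLE_sub hz hw hwx hwy))⟩

/-- If `x <₀ y ⟺ -y <₀ -x` holds on nonzero non-isolated elements, and `x, y` are
non-isolated with infimum `z = x ∧₀ y`, then `x - z` and `y - z` are non-isolated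
and `(x - z) ∧₀ (y - z) = 0`. -/
theorem stmt17 {C : Type*} [AddCommGroup C] (R : C → C → C → Prop)
    (hR : IsPCO R)
    (hsym : ∀ x y : C, x ∈ nonIsol R → y ∈ nonIsol R → x ≠ 0 → y ≠ 0 →
      (R 0 x y ↔ R 0 (-y) (-x)))
    (x y z : C) (hx : x ∈ nonIsol R) (hy : y ∈ nonIsol R)
    (hz : IsInf0 R x y z) :
    x - z ∈ nonIsol R ∧ y - z ∈ nonIsol R ∧ IsInf0 R (x - z) (y - z) 0 :=
  stmt17_general R hR x y z hx hy hz
end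

section
/- Let G be an abelian lattice-ordered group with strong unit u > 0 which is not linearly ordered. Then the quotient group G/ℤu is infinite. -/
section aux

variable {G : Type*} [Lattice G] [AddCommGroup G]
    [CovariantClass G G (· + ·) (· ≤ ·)]

lemma aux_add_inf_le {a b c : G} (ha : 0 ≤ a) (hb : 0 ≤ b) (hc : 0 ≤ c) :
    (a + b) ⊓ c ≤ (a ⊓ c) + (b ⊓ c) := by
  have : (a ⊓ c) + (b ⊓ c) = ((a + b) ⊓ (a + c)) ⊓ ((c + b) ⊓ (c + c)) := by
    rw [add_inf, inf_add, inf_add]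
    ac_rfl
  rw [this]
  refine le_inf (le_inf inf_le_left ?_) (le_inf ?_ ?_)
  · exact inf_le_right.trans (le_add_of_nonneg_left ha)
  · exact inf_le_right.trans (le_add_of_nonneg_right hb)
  · exact inf_le_right.trans (le_add_of_nonneg_right hc)

lemma aux_nsmul_inf {x y : G} (hx : 0 ≤ x) (hy : 0 ≤ y) (h : x ⊓ y = 0) (n : ℕ) :
    (n • x) ⊓ y = 0 := by
  induction n with
  | zero => simpa using hy
  | succ n ih =>
    have h1 : (n • x + x) ⊓ y ≤ 0 := by
      calc (n • x + x) ⊓ y ≤ (n • x ⊓ y) + (x ⊓ y) :=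
            aux_add_inf_le (nsmul_nonneg hx n) hx hy
        _ = 0 := by rw [ih, h, add_zero]
    have h2 : 0 ≤ (n • x + x) ⊓ y :=
      le_inf (add_nonneg (nsmul_nonneg hx n) hx) hy
    rw [succ_nsmul]
    exact le_antisymm h1 h2

end aux

/-- If an abelian ℓ-group `G` with strong unit `u` is not linearly ordered, then
`G ⧸ ℤu` is infinite. -/
theorem stmt18 {G : Type*} [Lattice G] [AddCommGroup G]
    [CovariantClass G G (· + ·) (· ≤ ·)]
    (u : G) (hu : 0 < u) (hsu : ∀ g : G, ∃ n : ℕ, g ≤ n • u)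
    (hnl : ¬ ∀ x y : G, x ≤ y ∨ y ≤ x) :
    Infinite (G ⧸ AddSubgroup.zmultiples u) := by
  push_neg at hnl
  obtain ⟨a, b, hab, hba⟩ := hnl
  set x := a - a ⊓ b with hxdef
  set y := b - a ⊓ b with hydef
  have hx : 0 < x := by
    rw [hxdef, sub_pos]
    exact lt_of_le_of_ne inf_le_left (fun h => hab (inf_eq_left.mp h))
  have hy : 0 < y := by
    rw [hydef, sub_pos]
    exact lt_of_le_of_ne inf_le_right (fun h => hba (inf_eq_right.mp h))
  have hxy : x ⊓ y = 0 := by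
    rw [hxdef, hydef, ← inf_sub, sub_self]
  -- key: for all n, n • x ⊓ y = 0
  have key : ∀ n : ℕ, (n • x) ⊓ y = 0 := aux_nsmul_inf hx.le hy.le hxy
  -- the map n ↦ [n • x] is injective
  refine Infinite.of_injective
    (fun n : ℕ => QuotientAddGroup.mk (s := AddSubgroup.zmultiples u) (n • x)) ?_
  -- suffices: no positive multiple of x is congruent to 0 via a ≥ 1 difference
  have main : ∀ m n : ℕ, n < m →
      QuotientAddGroup.mk (s := AddSubgroup.zmultiples u) (m • x) ≠
      QuotientAddGroup.mk (s := AddSubgroup.zmultiples u) (n • x) := by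
    intro m n hnm h
    rw [QuotientAddGroup.eq] at h
    obtain ⟨k, hk⟩ := h
    -- hk : k • u = -(m • x) + n • x
    set d : ℕ := m - n with hd
    have hd1 : 1 ≤ d := Nat.one_le_iff_ne_zero.mpr (Nat.sub_ne_zero_of_lt hnm)
    have hdx : (-k) • u = d • x := by
      have hk2 : k • u = -(m • x) + n • x := hk
      have h2 : ((-k) • u : G) = m • x - n • x := by
        rw [neg_zsmul, hk2, neg_add_rev, neg_neg, neg_add_eq_sub]
      rw [h2, sub_nsmul x hnm.le, sub_eq_add_neg]
    have hdxpos : 0 < d • x := nsmul_pos hx (Nat.one_le_iff_ne_zero.mp hd1)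
    -- -k ≥ 1
    have hkpos : 1 ≤ -k := by
      by_contra hcon
      push_neg at hcon
      have h0 : -k ≤ 0 := by omega
      obtain ⟨j, hj⟩ := Int.exists_eq_neg_ofNat h0
      have : (-k) • u ≤ 0 := by
        rw [hj, neg_zsmul, natCast_zsmul, neg_nonpos]
        exact nsmul_nonneg hu.le j
      rw [hdx] at this
      exact absurd this hdxpos.not_ge
    have hule : u ≤ d • x := by
      have : u ≤ (-k) • u := by
        obtain ⟨j, hj⟩ : ∃ j : ℕ, -k - 1 = (j : ℤ) :=
          ⟨(-k - 1).toNat, by omega⟩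
        have e : (-k) • u = (1:ℤ) • u + (-k - 1) • u := by
          rw [← add_zsmul]; congr 1; ring
        rw [e, one_zsmul, hj, natCast_zsmul]
        exact le_add_of_nonneg_right (nsmul_nonneg hu.le j)
      exact this.trans_eq hdx
    obtain ⟨N, hN⟩ := hsu y
    have hy2 : y ≤ (d * N) • x := by
      calc y ≤ N • u := hN
        _ ≤ N • (d • x) := nsmul_le_nsmul_right hule N
        _ = (d * N) • x := (mul_nsmul x d N).symm
    have : y = 0 := by
      have := key (d * N)
      rwa [inf_eq_right.mpr hy2] at this
    exact absurd this hy.ne'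
  intro m n h
  by_contra hne
  rcases lt_or_gt_of_ne hne with h1 | h1
  · exact main n m h1 h.symm
  · exact main m n h1 h
end
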